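/- Let G be a connected graph with d vertices, e edges and minimum degree δ(G) ≥ 2. Then for any integer α with 2 ≤ α ≤ δ(G) and any β ≥ ω(G), c_4(G) ≤ (2e − αd)²/8 · (1 − 1/β) + e(d − α² + 1)/4 + ((α−2)/4)·Σ₂, where Σ₂ = Σ_i deg(i)² and ω(G) is the clique number. -/

import Mathlib

open SimpleGraph

variable {V : Type*}

/-- Number of 4-cycle subgraphs of `G`: each 4-cycle corresponds to 8 ordered
tuples `(a,b,c,d)` of vertices with `a~b~c~d~a` and `a ≠ c`, `b ≠ d`. -/
noncomputable def c4 (G : SimpleGraph V) : ℕ :=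
  Nat.card {p : V × V × V × V //
    G.Adj p.1 p.2.1 ∧ G.Adj p.2.1 p.2.2.1 ∧ G.Adj p.2.2.1 p.2.2.2 ∧ G.Adj p.2.2.2 p.1 ∧
    p.1 ≠ p.2.2.1 ∧ p.2.1 ≠ p.2.2.2} / 8

/-- Number of `K₄` subgraphs of `G`, i.e. of 4-element cliques. -/
noncomputable def k4 (G : SimpleGraph V) : ℕ :=
  Nat.card {s : Finset V // G.IsNClique 4 s}

/-- Number of edges of `G`. -/
noncomputable def edgeCount (G : SimpleGraph V) : ℕ := Nat.card G.edgeSet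

/-- Degree of the vertex `v` in `G`. -/
noncomputable def deg (G : SimpleGraph V) (v : V) : ℕ := Nat.card (G.neighborSet v)

/-- Minimum degree of `G`. -/
noncomputable def minDeg (G : SimpleGraph V) : ℕ := sInf (Set.range (deg G))

/-- Maximum degree of `G`. -/
noncomputable def maxDeg (G : SimpleGraph V) : ℕ := sSup (Set.range (deg G))

/-- Clique number of `G`. -/
noncomputable def cliqueNum (G : SimpleGraph V) : ℕ :=
  sSup {n | ∃ s : Finset V, G.IsNClique n s}

/-- `G` has at least one odd cycle. -/
def HasOddCycle (G : SimpleGraph V) : Prop :=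
  ∃ (v : V) (w : G.Walk v v), w.IsCycle ∧ Odd w.length

/-- Number of triangles of `G` containing both vertices `i` and `j`
(for an edge `{i,j}`, the number of common neighbors of `i` and `j`). -/
noncomputable def c3edge (G : SimpleGraph V) (i j : V) : ℕ :=
  Nat.card {k : V // G.Adj i k ∧ G.Adj j k}

/-- Number of 4-cycles of `G` containing the edge `{i,j}`: such a cycle
`i - j - k - l - i` is determined by the ordered pair `(k,l)`. -/
noncomputable def c4edge (G : SimpleGraph V) (i j : V) : ℕ :=
  Nat.card {p : V × V // G.Adj j p.1 ∧ G.Adj p.1 p.2 ∧ G.Adj p.2 i ∧ p.1 ≠ i ∧ p.2 ≠ j}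

/-- Number of 4-cycles of `G` passing through the vertex `v`. -/
noncomputable def c4vertex (G : SimpleGraph V) (v : V) : ℕ :=
  Nat.card {p : V × V × V // G.Adj v p.1 ∧ G.Adj p.1 p.2.1 ∧ G.Adj p.2.1 p.2.2 ∧
    G.Adj p.2.2 v ∧ p.1 ≠ p.2.2 ∧ v ≠ p.2.1} / 2

/-!
A 4-cycle through the edge `ij` is a pair `(k, l)` with `k ∈ N(j) \ {i}`, `l ∈ N(i) \ {j}`,
`k ~ l` and `k ≠ l`. As `N(i) ∪ N(j)` avoids `i` and `j`, the two neighbourhoods share at least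
`deg i + deg j - d` vertices, which leaves at most `(deg i - 2)(deg j - 2) + d - 3` such pairs.
With `x v = deg v - α ≥ 0` this is `x i x j + (α - 2)(deg i + deg j) + d - α² + 1`, and summing
over the `2e` ordered edges gives `8 c₄ ≤ xᵀAx + 2(α - 2) Σ₂ + 2e(d - α² + 1)`.

The Motzkin–Straus inequality `xᵀAx ≤ (1 - 1/ω)(Σ x)²` for `x ≥ 0`, with `Σ x = 2e - αd`, bounds
the remaining term. It is proved by moving the whole weight of one of two non-adjacent vertices of
the support onto the other: in the right direction this does not decrease `xᵀAx`, and it shrinks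
the support until the support is a clique, where Cauchy–Schwarz gives the bound.
-/

open Finset Matrix

section Counting

variable [Fintype V] (G : SimpleGraph V)

lemma card_le_cliqueNum {s : Finset V} (hs : G.IsClique (s : Set V)) : #s ≤ _root_.cliqueNum G :=
  le_csSup ⟨Fintype.card V, fun _ ⟨t, ht⟩ => ht.card_eq ▸ card_le_univ t⟩ ⟨s, hs, rfl⟩

variable [DecidableRel G.Adj]

lemma deg_eq_degree (v : V) : deg G v = G.degree v := by
  rw [deg, Nat.card_eq_fintype_card, card_neighborSet_eq_degree]

lemma edgeCount_eq_card_edgeFinset : edgeCount G = #G.edgeFinset := by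
  rw [edgeCount, Nat.card_eq_fintype_card, edgeFinset_card]

lemma minDeg_le_degree (v : V) : minDeg G ≤ G.degree v :=
  deg_eq_degree G v ▸ Nat.sInf_le ⟨v, rfl⟩

lemma sum_sum_neighborFinset_left {M : Type*} [AddCommMonoid M] (f : V → M) :
    ∑ i, ∑ _j ∈ G.neighborFinset i, f i = ∑ i, G.degree i • f i := by
  simp

lemma sum_sum_neighborFinset_right {M : Type*} [AddCommMonoid M] (f : V → M) :
    ∑ i, ∑ j ∈ G.neighborFinset i, f j = ∑ j, G.degree j • f j := by
  rw [sum_comm' (t' := univ) (s' := fun j => G.neighborFinset j) (by simp [adj_comm])]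
  simp

lemma sum_sum_neighborFinset_degree_add {R : Type*} [CommSemiring R] :
    ∑ i, ∑ j ∈ G.neighborFinset i, ((G.degree i : R) + G.degree j) =
      2 * ∑ v, (G.degree v : R) ^ 2 := by
  simp only [sum_add_distrib, sum_sum_neighborFinset_left, sum_sum_neighborFinset_right,
    nsmul_eq_mul, ← two_mul, sq]

lemma sum_sum_neighborFinset_const {R : Type*} [Semiring R] (c : R) :
    ∑ i, ∑ _j ∈ G.neighborFinset i, c = 2 * #G.edgeFinset * c := by
  rw [sum_sum_neighborFinset_left, ← sum_smul, sum_degrees_eq_twice_card_edges, nsmul_eq_mul,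
    Nat.cast_mul, Nat.cast_ofNat]

lemma sum_sum_neighborFinset_mul {R : Type*} [CommSemiring R] (x y : V → R) :
    ∑ i, ∑ j ∈ G.neighborFinset i, x i * y j = x ⬝ᵥ G.adjMatrix R *ᵥ y := by
  simp [dotProduct, mul_sum]

lemma natCard_fourCycleTuples :
    Nat.card {p : V × V × V × V //
      G.Adj p.1 p.2.1 ∧ G.Adj p.2.1 p.2.2.1 ∧ G.Adj p.2.2.1 p.2.2.2 ∧ G.Adj p.2.2.2 p.1 ∧
      p.1 ≠ p.2.2.1 ∧ p.2.1 ≠ p.2.2.2} =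
    ∑ i, ∑ j ∈ G.neighborFinset i, c4edge G i j := by
  let P : V × V → V × V → Prop := fun q r =>
    G.Adj q.1 q.2 ∧ G.Adj q.2 r.1 ∧ G.Adj r.1 r.2 ∧ G.Adj r.2 q.1 ∧ q.1 ≠ r.1 ∧ q.2 ≠ r.2
  have hsplit : ∀ q : V × V, Nat.card {r // P q r} =
      if G.Adj q.1 q.2 then c4edge G q.1 q.2 else 0 := by
    rintro ⟨i, j⟩
    split_ifs with hij
    · exact Nat.card_congr <| Equiv.subtypeEquivRight fun r => by
        simp only [P, hij, true_and, ne_comm]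
    · have : IsEmpty {r // P (i, j) r} := ⟨fun r => hij r.2.1⟩
      exact Nat.card_of_isEmpty
  refine (Nat.card_congr (((Equiv.prodAssoc V V (V × V)).symm.subtypeEquiv fun _ => Iff.rfl).trans
    (Equiv.subtypeProdEquivSigmaSubtype P))).trans ?_
  rw [Nat.card_sigma, Fintype.sum_prod_type]
  simp only [hsplit, ← sum_filter, neighborFinset_eq_filter]

lemma c4_le_sum_c4edge :
    (c4 G : ℚ) ≤ (∑ i, ∑ j ∈ G.neighborFinset i, (c4edge G i j : ℚ)) / 8 := by
  rw [c4, natCard_fourCycleTuples]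
  exact_mod_cast Nat.cast_div_le

lemma c4edge_le [DecidableEq V] {i j : V} (hij : G.Adj i j) :
    (c4edge G i j : ℤ) ≤ (G.degree i - 2) * (G.degree j - 2) + Fintype.card V - 3 := by
  set A := (G.neighborFinset j).erase i
  set B := (G.neighborFinset i).erase j
  have hA : #A + 1 = G.degree j := by
    rw [card_erase_add_one (by simpa using hij.symm), card_neighborFinset_eq_degree]
  have hB : #B + 1 = G.degree i := by
    rw [card_erase_add_one (by simpa using hij), card_neighborFinset_eq_degree]
  have hcycles : c4edge G i j + #(A ∩ B) ≤ #A * #B := by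
    have hsub : ({p | G.Adj j p.1 ∧ G.Adj p.1 p.2 ∧ G.Adj p.2 i ∧ p.1 ≠ i ∧ p.2 ≠ j} :
        Finset (V × V)) ⊆ A ×ˢ B \ (A ∩ B).diag := by
      rintro ⟨k, l⟩
      simp only [mem_filter, mem_univ, true_and, mem_sdiff, mem_product, mem_diag, A, B,
        mem_erase, mem_neighborFinset]
      rintro ⟨hjk, hkl, hli, hki, hlj⟩
      exact ⟨⟨⟨hki, hjk⟩, hlj, hli.symm⟩, fun h => hkl.ne h.2⟩
    have hdiag : (A ∩ B).diag ⊆ A ×ˢ B := fun p hp => by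
      simp only [mem_diag, mem_inter] at hp
      exact mem_product.2 ⟨hp.1.1, hp.2 ▸ hp.1.2⟩
    rw [c4edge, Nat.card_eq_fintype_card, Fintype.card_subtype, ← card_product,
      ← card_sdiff_add_card_eq_card hdiag, diag_card]
    exact Nat.add_le_add_right (card_le_card hsub) _
  have hunion : #(A ∪ B) + 2 ≤ Fintype.card V := by
    have hsub : A ∪ B ⊆ ({i, j} : Finset V)ᶜ := by
      intro k
      simp only [mem_union, A, B, mem_erase, mem_neighborFinset, mem_compl, mem_insert,
        mem_singleton]
      rintro (⟨hki, hjk⟩ | ⟨hkj, hik⟩)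
      · exact fun h => h.elim hki fun h => G.irrefl (h ▸ hjk)
      · exact fun h => h.elim (fun h => G.irrefl (h ▸ hik)) hkj
    have := card_le_card hsub
    rw [card_compl, card_pair hij.ne] at this
    have := card_le_univ ({i, j} : Finset V)
    rw [card_pair hij.ne] at this
    omega
  have hinter := card_union_add_card_inter A B
  rw [← hA, ← hB]
  push_cast
  nlinarith

lemma c4_le_of_eq_degree_sub (α : ℚ) {x : V → ℚ} (hx : ∀ v, x v = G.degree v - α) :
    (c4 G : ℚ) ≤ (x ⬝ᵥ G.adjMatrix ℚ *ᵥ x + (α - 2) * (2 * ∑ v, (G.degree v : ℚ) ^ 2) +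
      2 * #G.edgeFinset * (Fintype.card V - α ^ 2 + 1)) / 8 := by
  classical
  have hedge : ∀ i, ∀ j ∈ G.neighborFinset i, (c4edge G i j : ℚ) ≤
      x i * x j + (α - 2) * (G.degree i + G.degree j) + (Fintype.card V - α ^ 2 + 1) := by
    intro i j hj
    have : (c4edge G i j : ℚ) ≤ (G.degree i - 2) * (G.degree j - 2) + Fintype.card V - 3 := by
      exact_mod_cast c4edge_le G ((mem_neighborFinset G i j).1 hj)
    rw [hx, hx]
    linarith
  calc (c4 G : ℚ) ≤ (∑ i, ∑ j ∈ G.neighborFinset i, (c4edge G i j : ℚ)) / 8 :=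
        c4_le_sum_c4edge G
    _ ≤ (∑ i, ∑ j ∈ G.neighborFinset i,
          (x i * x j + (α - 2) * (G.degree i + G.degree j) + (Fintype.card V - α ^ 2 + 1))) / 8 := by
        gcongr with i _ j hj
        exact hedge i j hj
    _ = _ := by
        rw [← sum_sum_neighborFinset_mul, ← sum_sum_neighborFinset_degree_add,
          ← sum_sum_neighborFinset_const]
        simp only [mul_sum, ← sum_add_distrib]

end Counting

section QuadraticForm

variable {R : Type*} [Field R] [LinearOrder R] [IsStrictOrderedRing R]
  [Fintype V] [DecidableEq V] (G : SimpleGraph V) [DecidableRel G.Adj]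

lemma dotProduct_adjMatrix_mulVec_le_sq_sum_sub {x : V → R} (hx : ∀ v, 0 ≤ x v) :
    x ⬝ᵥ G.adjMatrix R *ᵥ x ≤ (∑ v, x v) ^ 2 - ∑ v, x v ^ 2 := by
  have hterm : ∀ i j, x i * (G.adjMatrix R i j * x j) ≤
      x i * x j - if i = j then x i * x j else 0 := by
    intro i j
    by_cases hij : i = j
    · subst hij; simp
    · have := mul_nonneg (hx i) (hx j)
      by_cases hadj : G.Adj i j <;> simp [hij, hadj, this]
  calc x ⬝ᵥ G.adjMatrix R *ᵥ x = ∑ i, ∑ j, x i * (G.adjMatrix R i j * x j) := by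
        simp only [dotProduct, mulVec, mul_sum]
    _ ≤ ∑ i, ∑ j, (x i * x j - if i = j then x i * x j else 0) := by
        gcongr with i _ j; exact hterm i j
    _ = (∑ v, x v) ^ 2 - ∑ v, x v ^ 2 := by simp [sum_sub_distrib, sq, sum_mul_sum]

lemma dotProduct_adjMatrix_mulVec_le_of_card_support_le {x : V → R} (hx : ∀ v, 0 ≤ x v)
    {β : R} (hβ : (#{v | x v ≠ 0} : R) ≤ β) :
    x ⬝ᵥ G.adjMatrix R *ᵥ x ≤ (1 - 1 / β) * (∑ v, x v) ^ 2 := by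
  have hQ : 0 ≤ ∑ v, x v ^ 2 := sum_nonneg fun v _ => sq_nonneg (x v)
  have hCS : (∑ v, x v) ^ 2 ≤ #{v | x v ≠ 0} * ∑ v, x v ^ 2 := by
    rw [← sum_filter_ne_zero, ← sum_filter_ne_zero (s := univ) (f := fun v => x v ^ 2)]
    simp_rw [pow_ne_zero_iff two_ne_zero]
    exact sq_sum_le_card_mul_sum_sq
  have hle := dotProduct_adjMatrix_mulVec_le_sq_sum_sub G hx
  rcases le_or_gt β 0 with hβ0 | hβ0
  · have hT : (∑ v, x v) ^ 2 = 0 := by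
      have : (#{v | x v ≠ 0} : R) = 0 := le_antisymm (hβ.trans hβ0) (Nat.cast_nonneg _)
      nlinarith [sq_nonneg (∑ v, x v)]
    rw [hT, mul_zero]
    linarith
  · have : (∑ v, x v) ^ 2 / β ≤ ∑ v, x v ^ 2 := by
      rw [div_le_iff₀ hβ0]
      nlinarith
    calc x ⬝ᵥ G.adjMatrix R *ᵥ x ≤ (∑ v, x v) ^ 2 - (∑ v, x v) ^ 2 / β := by linarith
      _ = (1 - 1 / β) * (∑ v, x v) ^ 2 := by ring

end QuadraticForm

section MoveWeight

variable {R : Type*} [CommRing R] [DecidableEq V]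

def moveWeight (x : V → R) (u v : V) : V → R :=
  x + x v • (Pi.single u 1 - Pi.single v 1)

variable {x : V → R} {u v : V}

lemma moveWeight_apply (huv : u ≠ v) (w : V) :
    moveWeight x u v w = if w = v then 0 else if w = u then x u + x v else x w := by
  by_cases hv : w = v
  · subst hv; simp [moveWeight, huv.symm]
  · by_cases hu : w = u
    · subst hu; simp [moveWeight, hv]
    · simp [moveWeight, hu, hv]

lemma moveWeight_nonneg [LinearOrder R] [IsOrderedRing R] (hx : ∀ w, 0 ≤ x w) (huv : u ≠ v)
    (w : V) : 0 ≤ moveWeight x u v w := by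
  rw [moveWeight_apply huv]
  split_ifs
  exacts [le_rfl, add_nonneg (hx u) (hx v), hx w]

lemma support_moveWeight_subset [LinearOrder R] [Fintype V] (huv : u ≠ v) (hu : x u ≠ 0) :
    ({w | moveWeight x u v w ≠ 0} : Finset V) ⊆ ({w | x w ≠ 0} : Finset V).erase v := by
  intro w
  simp only [mem_filter, mem_univ, true_and, mem_erase, moveWeight_apply huv]
  split_ifs <;> simp_all

variable [Fintype V]

lemma sum_moveWeight : ∑ w, moveWeight x u v w = ∑ w, x w := by
  simp [moveWeight, sum_add_distrib, ← mul_sum]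

lemma dotProduct_adjMatrix_mulVec_moveWeight {G : SimpleGraph V} [DecidableRel G.Adj]
    (hna : ¬ G.Adj u v) :
    moveWeight x u v ⬝ᵥ G.adjMatrix R *ᵥ moveWeight x u v =
      x ⬝ᵥ G.adjMatrix R *ᵥ x +
        2 * x v * ((G.adjMatrix R *ᵥ x) u - (G.adjMatrix R *ᵥ x) v) := by
  set A := G.adjMatrix R
  set g : V → R := Pi.single u 1 - Pi.single v 1
  have hsymm : x ⬝ᵥ A *ᵥ g = g ⬝ᵥ A *ᵥ x := by
    rw [dotProduct_mulVec, ← mulVec_transpose, G.isSymm_adjMatrix.eq, dotProduct_comm]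
  have hgx : g ⬝ᵥ A *ᵥ x = (A *ᵥ x) u - (A *ᵥ x) v := by
    simp [g, sub_dotProduct]
  have hgg : g ⬝ᵥ A *ᵥ g = 0 := by
    simp [g, A, sub_dotProduct, mulVec_sub, hna, adj_comm]
  change (x + x v • g) ⬝ᵥ A *ᵥ (x + x v • g) = _
  simp only [mulVec_add, mulVec_smul, dotProduct_add, add_dotProduct,
    dotProduct_smul, smul_dotProduct, smul_eq_mul, hsymm, hgx, hgg]
  ring

end MoveWeight

section MotzkinStraus

variable {R : Type*} [Field R] [LinearOrder R] [IsStrictOrderedRing R]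
  [Fintype V] [DecidableEq V] (G : SimpleGraph V) [DecidableRel G.Adj]

theorem motzkin_straus {β : R} (hβ : ∀ s : Finset V, G.IsClique (s : Set V) → (#s : R) ≤ β)
    {x : V → R} (hx : ∀ v, 0 ≤ x v) :
    x ⬝ᵥ G.adjMatrix R *ᵥ x ≤ (1 - 1 / β) * (∑ v, x v) ^ 2 := by
  induction hn : #{v | x v ≠ 0} using Nat.strong_induction_on generalizing x with
  | _ n ih =>
  by_cases hS : G.IsClique (({v | x v ≠ 0} : Finset V) : Set V)
  · exact dotProduct_adjMatrix_mulVec_le_of_card_support_le G hx (hβ _ hS)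
  obtain ⟨u, hu, v, hv, huv, hna⟩ : ∃ u, x u ≠ 0 ∧ ∃ v, x v ≠ 0 ∧ u ≠ v ∧ ¬ G.Adj u v := by
    simpa [IsClique, Set.Pairwise] using hS
  wlog hle : (G.adjMatrix R *ᵥ x) v ≤ (G.adjMatrix R *ᵥ x) u generalizing u v
  · exact this v hv u hu huv.symm (fun h => hna h.symm) (le_of_not_ge hle)
  have hcard : #{w | moveWeight x u v w ≠ 0} < n :=
    hn ▸ (card_le_card (support_moveWeight_subset huv hu)).trans_lt
      (card_erase_lt_of_mem (by simpa using hv))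
  calc x ⬝ᵥ G.adjMatrix R *ᵥ x ≤ moveWeight x u v ⬝ᵥ G.adjMatrix R *ᵥ moveWeight x u v := by
        rw [dotProduct_adjMatrix_mulVec_moveWeight hna]
        nlinarith [hx v]
    _ ≤ (1 - 1 / β) * (∑ w, moveWeight x u v w) ^ 2 :=
        ih _ hcard (moveWeight_nonneg hx huv) rfl
    _ = (1 - 1 / β) * (∑ w, x w) ^ 2 := by rw [sum_moveWeight]

end MotzkinStraus

theorem c4_upper_bound_general [Fintype V] (G : SimpleGraph V)
    (d e : ℕ) (hd : d = Fintype.card V) (he : e = edgeCount G)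
    (α : ℕ) (hαδ : α ≤ minDeg G)
    (β : ℚ) (hβ : (_root_.cliqueNum G : ℚ) ≤ β) :
    (c4 G : ℚ) ≤ (2 * (e : ℚ) - α * d) ^ 2 / 8 * (1 - 1 / β) +
      (e : ℚ) * ((d : ℚ) - (α : ℚ) ^ 2 + 1) / 4 +
      ((α : ℚ) - 2) / 4 * (∑ v : V, (deg G v : ℚ) ^ 2) := by
  classical
  subst hd he
  rw [edgeCount_eq_card_edgeFinset]
  simp only [deg_eq_degree]
  set x : V → ℚ := fun v => (G.degree v : ℚ) - α
  have hx : ∀ v, 0 ≤ x v := fun v =>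
    sub_nonneg.2 (by exact_mod_cast hαδ.trans (minDeg_le_degree G v))
  have hsum_x : ∑ v, x v = 2 * #G.edgeFinset - α * Fintype.card V := by
    have : ∑ v, (G.degree v : ℚ) = 2 * #G.edgeFinset := by
      exact_mod_cast sum_degrees_eq_twice_card_edges G
    simp [x, sum_sub_distrib, this, mul_comm]
  have hMS : x ⬝ᵥ G.adjMatrix ℚ *ᵥ x ≤ (1 - 1 / β) * (∑ v, x v) ^ 2 :=
    motzkin_straus G (fun s hs => (Nat.cast_le.2 (card_le_cliqueNum G hs)).trans hβ) hx
  have hcount := c4_le_of_eq_degree_sub G α (x := x) fun _ => rfl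
  rw [hsum_x] at hMS
  linarith

/-- For a connected graph `G` with `d` vertices, `e` edges and
minimum degree `≥ 2`, for any `2 ≤ α ≤ δ(G)` and any `β ≥ ω(G)`:
`c₄(G) ≤ (2e − αd)²/8 · (1 − 1/β) + e(d − α² + 1)/4 + ((α−2)/4)·Σ₂`. -/
theorem c4_upper_bound [Fintype V] (G : SimpleGraph V) (hconn : G.Connected)
    (hδ2 : 2 ≤ minDeg G) (d e : ℕ) (hd : d = Fintype.card V) (he : e = edgeCount G)
    (α : ℕ) (hα2 : 2 ≤ α) (hαδ : α ≤ minDeg G)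
    (β : ℚ) (hβ : (_root_.cliqueNum G : ℚ) ≤ β) :
    (c4 G : ℚ) ≤ (2 * (e : ℚ) - α * d) ^ 2 / 8 * (1 - 1 / β) +
      (e : ℚ) * ((d : ℚ) - (α : ℚ) ^ 2 + 1) / 4 +
      ((α : ℚ) - 2) / 4 * (∑ v : V, (deg G v : ℚ) ^ 2) :=
  c4_upper_bound_general G d e hd he α hαδ β hβ
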